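/- Let (A,B) be a consistent instance and p a prime dividing every element of L(A,B). Then the map X ↦ X⊘p is a bijection from the set of solutions of (A,B) onto the set of solutions of (A⊟p, B⊘p), with inverse X' ↦ X'⊗p. -/
import Mathlib


/-- A sum of cycles has all cycle lengths positive. -/
def Pos (A : ℕ →₀ ℕ) : Prop := ∀ a ∈ A.support, 0 < a

/-- The single cycle of length `n`. -/
noncomputable def Cyc (n : ℕ) : ℕ →₀ ℕ := Finsupp.single n 1

/-- Product of sums of cycles: `C_a · C_x = gcd(a,x) C_{lcm(a,x)}`, extended by distributivity. -/
noncomputable def cmul (A X : ℕ →₀ ℕ) : ℕ →₀ ℕ :=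
  A.sum fun a m => X.sum fun x n => (m * n * Nat.gcd a x) • Finsupp.single (Nat.lcm a x) 1

/-- Number of vertices of a sum of cycles. -/
def size (A : ℕ →₀ ℕ) : ℕ := A.sum fun ℓ m => ℓ * m

/-- The support `L(A,B)` of an instance. -/
def instSupp (A B : ℕ →₀ ℕ) : Set ℕ :=
  {x | 0 < x ∧ x ≤ size B / size A ∧ ∀ a ∈ A.support, Nat.lcm a x ∈ B.support}

/-- Consistency: `L(A) ∨ L(A,B) = L(B)`. -/
def Consistent (A B : ℕ →₀ ℕ) : Prop :=
  {ℓ | ∃ a ∈ A.support, ∃ x ∈ instSupp A B, Nat.lcm a x = ℓ} = ↑B.support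

/-- Cycle length multiplication `A ⊗ p`. -/
noncomputable def otimes (A : ℕ →₀ ℕ) (p : ℕ) : ℕ →₀ ℕ :=
  A.mapDomain (fun a => p * a)

/-- Cycle length division `A ⊘ p`: `(A ⊘ p)(a) = A (p*a)`. -/
noncomputable def oslash (A : ℕ →₀ ℕ) (p : ℕ) : ℕ →₀ ℕ :=
  if hp : p = 0 then 0 else
    Finsupp.comapDomain (fun a => p * a) A ((mul_right_injective₀ hp).injOn)

/-- Contraction `A ⊟ p`: each cycle of length `p*a` becomes `p` cycles of length `a`. -/
noncomputable def contract (A : ℕ →₀ ℕ) (p : ℕ) : ℕ →₀ ℕ :=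
  A.filter (fun a => ¬ p ∣ a) + p • oslash A p


lemma oslash_apply (X : ℕ →₀ ℕ) {p : ℕ} (hp : p ≠ 0) (a : ℕ) : oslash X p a = X (p * a) := by
  rw [oslash, dif_neg hp, Finsupp.comapDomain_apply]

lemma otimes_apply_mul (X : ℕ →₀ ℕ) {p : ℕ} (hp : p ≠ 0) (a : ℕ) :
    otimes X p (p * a) = X a :=
  Finsupp.mapDomain_apply (mul_right_injective₀ hp) X a

lemma otimes_apply_of_not_dvd (X : ℕ →₀ ℕ) {p n : ℕ} (h : ¬ p ∣ n) : otimes X p n = 0 := by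
  apply Finsupp.mapDomain_notin_range
  rintro ⟨x, rfl⟩
  exact h ⟨x, rfl⟩

lemma oslash_otimes (X : ℕ →₀ ℕ) {p : ℕ} (hp : p ≠ 0) : oslash (otimes X p) p = X := by
  ext a; rw [oslash_apply _ hp, otimes_apply_mul _ hp]

lemma otimes_oslash (X : ℕ →₀ ℕ) {p : ℕ} (hp : p ≠ 0) (h : ∀ x ∈ X.support, p ∣ x) :
    otimes (oslash X p) p = X := by
  ext n
  by_cases hn : p ∣ n
  · obtain ⟨c, rfl⟩ := hn
    rw [otimes_apply_mul _ hp, oslash_apply _ hp]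
  · rw [otimes_apply_of_not_dvd _ hn]
    by_contra h0
    exact hn (h n (Finsupp.mem_support_iff.mpr fun hx => h0 hx.symm))

lemma otimes_support (X : ℕ →₀ ℕ) {p : ℕ} (hp : p ≠ 0) :
    (otimes X p).support = X.support.image (p * ·) := by
  classical exact Finsupp.mapDomain_support_of_injective (mul_right_injective₀ hp) X

lemma cmul_apply (A X : ℕ →₀ ℕ) (ℓ : ℕ) :
    cmul A X ℓ = ∑ a ∈ A.support, ∑ x ∈ X.support,
      if Nat.lcm a x = ℓ then A a * X x * Nat.gcd a x else 0 := by
  classical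
  rw [cmul, Finsupp.sum, Finsupp.finset_sum_apply]
  refine Finset.sum_congr rfl fun a _ => ?_
  rw [Finsupp.sum, Finsupp.finset_sum_apply]
  refine Finset.sum_congr rfl fun x _ => ?_
  rw [Finsupp.smul_apply, Finsupp.single_apply, smul_eq_mul, mul_ite, mul_one, mul_zero]

lemma cmul_add_left (A₁ A₂ X : ℕ →₀ ℕ) : cmul (A₁ + A₂) X = cmul A₁ X + cmul A₂ X := by
  classical
  rw [cmul, cmul, cmul, Finsupp.sum_add_index]
  · intro a _
    simp
  · intro a _ m₁ m₂
    rw [← Finsupp.sum_add]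
    refine Finsupp.sum_congr fun x _ => ?_
    rw [← add_smul]
    ring_nf

lemma cmul_smul_left (c : ℕ) (A X : ℕ →₀ ℕ) : cmul (c • A) X = c • cmul A X := by
  classical
  rw [cmul, cmul, Finsupp.sum_smul_index, Finsupp.smul_sum]
  · refine Finsupp.sum_congr fun a _ => ?_
    rw [Finsupp.smul_sum]
    refine Finsupp.sum_congr fun x _ => ?_
    rw [smul_smul]
    ring_nf
  · intro a
    simp

lemma cmul_otimes_right (A X : ℕ →₀ ℕ) (p : ℕ) :
    cmul A (otimes X p) =
      A.sum fun a m => X.sum fun x n =>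
        (m * n * Nat.gcd a (p * x)) • Finsupp.single (Nat.lcm a (p * x)) 1 := by
  rw [cmul]
  refine Finsupp.sum_congr fun a _ => ?_
  rw [otimes, Finsupp.sum_mapDomain_index] <;> intros <;> simp [add_smul, add_mul, mul_add]

lemma cmul_otimes_left (A X : ℕ →₀ ℕ) (p : ℕ) :
    cmul (otimes A p) X =
      A.sum fun a m => X.sum fun x n =>
        (m * n * Nat.gcd (p * a) x) • Finsupp.single (Nat.lcm (p * a) x) 1 := by
  rw [cmul, otimes, Finsupp.sum_mapDomain_index]
  · intro a; simp
  · intro a m₁ m₂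
    rw [← Finsupp.sum_add]
    refine Finsupp.sum_congr fun x _ => ?_
    rw [← add_smul]
    ring_nf

lemma otimes_sum (A : ℕ →₀ ℕ) (f : ℕ → ℕ → (ℕ →₀ ℕ)) (p : ℕ) :
    otimes (A.sum f) p = A.sum fun a m => otimes (f a m) p := by
  rw [otimes, Finsupp.mapDomain_sum]; rfl

lemma otimes_smul (c : ℕ) (A : ℕ →₀ ℕ) (p : ℕ) : otimes (c • A) p = c • otimes A p := by
  rw [otimes, otimes, Finsupp.mapDomain_smul]

lemma otimes_single (n c p : ℕ) : otimes (Finsupp.single n c) p = Finsupp.single (p * n) c := by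
  rw [otimes, Finsupp.mapDomain_single]

lemma split_filter (A : ℕ →₀ ℕ) {p : ℕ} (hp : p ≠ 0) :
    A.filter (fun a => ¬ p ∣ a) + otimes (oslash A p) p = A := by
  classical
  ext n
  rw [Finsupp.add_apply, Finsupp.filter_apply]
  by_cases hn : p ∣ n
  · obtain ⟨c, rfl⟩ := hn
    rw [if_neg (by simp [Dvd.intro c rfl]), otimes_apply_mul _ hp, oslash_apply _ hp, zero_add]
  · rw [if_pos hn, otimes_apply_of_not_dvd _ hn, add_zero]

lemma lcm_mul_right_of_gcd {a p x : ℕ} (h : Nat.gcd a (p * x) = Nat.gcd a x) :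
    Nat.lcm a (p * x) = p * Nat.lcm a x := by
  rw [Nat.lcm, Nat.lcm, h, ← Nat.mul_div_assoc p (Dvd.dvd.mul_left (Nat.gcd_dvd_right a x) a)]
  ring_nf

lemma cmul_otimes_of_not_dvd (A' X : ℕ →₀ ℕ) {p : ℕ} (hp : p.Prime)
    (h : ∀ a ∈ A'.support, ¬ p ∣ a) :
    cmul A' (otimes X p) = otimes (cmul A' X) p := by
  rw [cmul_otimes_right, cmul, otimes_sum]
  refine Finsupp.sum_congr fun a ha => ?_
  rw [otimes_sum]
  refine Finsupp.sum_congr fun x _ => ?_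
  rw [otimes_smul, otimes_single]
  have hc : Nat.Coprime p a := (Nat.Prime.coprime_iff_not_dvd hp).mpr (h a ha)
  have hg : Nat.gcd a (p * x) = Nat.gcd a x := by
    rw [Nat.gcd_comm a (p * x), Nat.Coprime.gcd_mul_left_cancel x hc, Nat.gcd_comm]
  rw [hg, lcm_mul_right_of_gcd hg]

lemma cmul_otimes_otimes (D X : ℕ →₀ ℕ) (p : ℕ) :
    cmul (otimes D p) (otimes X p) = otimes (p • cmul D X) p := by
  rw [cmul_otimes_left, otimes_smul, cmul, otimes_sum, Finsupp.smul_sum]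
  refine Finsupp.sum_congr fun a _ => ?_
  rw [otimes, Finsupp.sum_mapDomain_index]
  · rw [otimes_sum, Finsupp.smul_sum]
    refine Finsupp.sum_congr fun x _ => ?_
    rw [otimes_smul, otimes_single, Nat.gcd_mul_left, Nat.lcm_mul_left, smul_smul]
    ring_nf
  · intro x; simp
  · intro x n₁ n₂
    rw [← add_smul]
    ring_nf

lemma cmul_key (A X : ℕ →₀ ℕ) {p : ℕ} (hp : p.Prime) :
    cmul A (otimes X p) = otimes (cmul (contract A p) X) p := by
  classical
  conv_lhs => rw [← split_filter A hp.ne_zero]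
  rw [cmul_add_left, contract, cmul_add_left, cmul_smul_left,
    show ∀ Y Z : ℕ →₀ ℕ, otimes (Y + Z) p = otimes Y p + otimes Z p from
      fun Y Z => Finsupp.mapDomain_add]
  congr 1
  · exact cmul_otimes_of_not_dvd _ _ hp fun a ha => by
      classical
      rw [Finsupp.support_filter, Finset.mem_filter] at ha
      exact ha.2
  · exact cmul_otimes_otimes _ _ p

noncomputable def sizeHom : (ℕ →₀ ℕ) →+ ℕ :=
  Finsupp.liftAddHom fun ℓ => AddMonoidHom.mulLeft ℓ

lemma sizeHom_eq (A : ℕ →₀ ℕ) : sizeHom A = size A := by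
  rw [sizeHom, Finsupp.liftAddHom_apply, size]; rfl

lemma sizeHom_single (ℓ c : ℕ) : sizeHom (Finsupp.single ℓ c) = ℓ * c := by
  rw [sizeHom_eq, size, Finsupp.sum_single_index (mul_zero ℓ)]

lemma size_cmul (A X : ℕ →₀ ℕ) : size (cmul A X) = size A * size X := by
  classical
  rw [← sizeHom_eq, cmul, Finsupp.sum, map_sum]
  have : ∀ a ∈ A.support,
      sizeHom (X.sum fun x n => (A a * n * Nat.gcd a x) • Finsupp.single (Nat.lcm a x) 1)
        = ∑ x ∈ X.support, (a * A a) * (x * X x) := by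
    intro a _
    rw [Finsupp.sum, map_sum]
    refine Finset.sum_congr rfl fun x _ => ?_
    rw [map_nsmul, sizeHom_single, smul_eq_mul, mul_one]
    calc A a * X x * Nat.gcd a x * Nat.lcm a x
        = A a * X x * (Nat.gcd a x * Nat.lcm a x) := by ring
      _ = A a * X x * (a * x) := by rw [Nat.gcd_mul_lcm]
      _ = a * A a * (x * X x) := by ring
  rw [Finset.sum_congr rfl this, size, size, Finsupp.sum, Finsupp.sum, Finset.sum_mul_sum]

lemma cmul_pos {A X : ℕ →₀ ℕ} {a x : ℕ} (ha : a ∈ A.support) (hx : x ∈ X.support)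
    (ha0 : 0 < a) : 0 < cmul A X (Nat.lcm a x) := by
  classical
  rw [cmul_apply]
  have hA0 := Finsupp.mem_support_iff.mp ha
  have hX0 := Finsupp.mem_support_iff.mp hx
  have hterm : 0 < A a * X x * Nat.gcd a x :=
    Nat.mul_pos (Nat.mul_pos (Nat.pos_of_ne_zero hA0) (Nat.pos_of_ne_zero hX0))
      (Nat.gcd_pos_of_pos_left x ha0)
  have h3 : (if Nat.lcm a x = Nat.lcm a x then A a * X x * Nat.gcd a x else 0)
      ≤ ∑ x' ∈ X.support, if Nat.lcm a x' = Nat.lcm a x then A a * X x' * Nat.gcd a x' else 0 :=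
    Finset.single_le_sum
      (f := fun x' => if Nat.lcm a x' = Nat.lcm a x then A a * X x' * Nat.gcd a x' else 0)
      (fun _ _ => Nat.zero_le _) hx
  have h2 : (∑ x' ∈ X.support, if Nat.lcm a x' = Nat.lcm a x then A a * X x' * Nat.gcd a x' else 0)
      ≤ ∑ a' ∈ A.support, ∑ x' ∈ X.support,
          if Nat.lcm a' x' = Nat.lcm a x then A a' * X x' * Nat.gcd a' x' else 0 :=
    Finset.single_le_sum
      (f := fun a' => ∑ x' ∈ X.support,
          if Nat.lcm a' x' = Nat.lcm a x then A a' * X x' * Nat.gcd a' x' else 0)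
      (fun _ _ => Nat.zero_le _) ha
  rw [if_pos rfl] at h3
  exact lt_of_lt_of_le hterm (le_trans h3 h2)

lemma le_size {X : ℕ →₀ ℕ} {x : ℕ} (hx : x ∈ X.support) : x ≤ size X := by
  classical
  have h1 : x * X x ≤ size X := by
    rw [size, Finsupp.sum]
    exact Finset.single_le_sum (f := fun ℓ => ℓ * X ℓ) (fun _ _ => Nat.zero_le _) hx
  calc x = x * 1 := (mul_one x).symm
    _ ≤ x * X x := Nat.mul_le_mul_left x (Nat.one_le_iff_ne_zero.mpr (Finsupp.mem_support_iff.mp hx))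
    _ ≤ size X := h1

lemma size_pos {A : ℕ →₀ ℕ} (hA : ∀ a ∈ A.support, 0 < a) (hne : A ≠ 0) : 0 < size A := by
  classical
  obtain ⟨a, ha⟩ := Finsupp.support_nonempty_iff.mpr hne
  have h1 : a * A a ≤ size A := by
    rw [size, Finsupp.sum]
    exact Finset.single_le_sum (f := fun ℓ => ℓ * A ℓ) (fun _ _ => Nat.zero_le _) ha
  exact lt_of_lt_of_le (Nat.mul_pos (hA a ha)
    (Nat.pos_of_ne_zero (Finsupp.mem_support_iff.mp ha))) h1

theorem reduction_bijection (A B : ℕ →₀ ℕ) (hA : Pos A) (hB : Pos B)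
    (hAne : A ≠ 0) (hBne : B ≠ 0) (hcons : Consistent A B)
    (p : ℕ) (hp : p.Prime) (hdvd : ∀ x ∈ instSupp A B, p ∣ x) :
    (∀ X : ℕ →₀ ℕ, Pos X → cmul A X = B →
        Pos (oslash X p) ∧ cmul (contract A p) (oslash X p) = oslash B p ∧
          otimes (oslash X p) p = X) ∧
    (∀ X' : ℕ →₀ ℕ, Pos X' → cmul (contract A p) X' = oslash B p →
        Pos (otimes X' p) ∧ cmul A (otimes X' p) = B ∧ oslash (otimes X' p) p = X') := by
  have hp0 : p ≠ 0 := hp.ne_zero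
  have hsA : 0 < size A := size_pos hA hAne
  constructor
  · intro X hX hAX
    have hsuppX : ∀ x ∈ X.support, p ∣ x := by
      intro x hx
      apply hdvd
      refine ⟨hX x hx, ?_, ?_⟩
      · rw [← hAX, size_cmul, Nat.mul_div_cancel_left _ hsA]
        exact le_size hx
      · intro a ha
        rw [← hAX, Finsupp.mem_support_iff]
        exact (cmul_pos ha hx (hA a ha)).ne'
    have hXeq : otimes (oslash X p) p = X := otimes_oslash X hp0 hsuppX
    refine ⟨?_, ?_, hXeq⟩
    · intro a ha
      rw [Finsupp.mem_support_iff, oslash_apply _ hp0] at ha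
      rcases Nat.eq_zero_or_pos a with rfl | h
      · rw [mul_zero] at ha
        exact absurd (hX 0 (Finsupp.mem_support_iff.mpr ha)) (lt_irrefl 0)
      · exact h
    · have hkey := cmul_key A (oslash X p) hp
      rw [hXeq, hAX] at hkey
      rw [hkey, oslash_otimes _ hp0]
  · intro X' hX' hCX
    have hBdvd : ∀ b ∈ B.support, p ∣ b := by
      intro b hb
      have hb' : b ∈ {ℓ | ∃ a ∈ A.support, ∃ x ∈ instSupp A B, Nat.lcm a x = ℓ} := by
        rw [hcons]
        exact hb
      obtain ⟨a, -, x, hx, rfl⟩ := hb'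
      exact (hdvd x hx).trans (Nat.dvd_lcm_right a x)
    refine ⟨?_, ?_, oslash_otimes X' hp0⟩
    · intro n hn
      rw [otimes_support _ hp0, Finset.mem_image] at hn
      obtain ⟨x, hx, rfl⟩ := hn
      exact Nat.mul_pos hp.pos (hX' x hx)
    · rw [cmul_key A X' hp, hCX, otimes_oslash B hp0 hBdvd]
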